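/- Switch lemma between two anisotropic weighted measures: let n ≥ 2, and suppose θ₁, θ₂, θ₃, θ₄ satisfy θ₁, θ₃ > -(n-1), w₁ = |x'|^{θ₁}|x|^{θ₂} and w₂ = |x'|^{θ₃}|x|^{θ₄} are locally integrable, and θ₃ + min{0,θ₄} > 1-n. Set β = n-1+θ₃+min{0,θ₄}+max{0,θ₁-θ₃}+max{0,θ₂-θ₄} and ϑ = θ₁+θ₂-θ₃-θ₄, and let Q(ρ) = B_ρ × (-ρ^{p+ϑ}, 0] for p > 1. Then there exists C₀ = C₀(n,p,θ₁,θ₂,θ₃,θ₄) such that for any ε, ρ ∈ (0,1/2] and any measurable set Ẽ ⊂ Q(ρ), if ν_{w₁}(Ẽ)/ν_{w₁}(Q(ρ)) ≤ ε^β then ν_{w₂}(Ẽ)/ν_{w₂}(Q(ρ)) ≤ C₀ ε^{n-1+θ₃+min{0,θ₄}}. -/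

import Mathlib

/-!
Split `E` according to whether `|x'| > ερ`. There `ερ < |x'| ≤ |x| < ρ`, so the ratio
`w₂ / w₁ = |x'|^{θ₃-θ₁} |x|^{θ₄-θ₂}` is at most `ρ^{θ₃+θ₄-θ₁-θ₂} ε^{-max(0,θ₁-θ₃)-max(0,θ₂-θ₄)}`,
and the hypothesis `ν_{w₁}(E) ≤ ε^β ν_{w₁}(Q)` absorbs exactly these negative powers of `ε`.
The rest of `E` lies in `({|x'| ≤ ερ} ∩ B_ρ) × (-ρ^{p+ϑ}, 0]`. The part of the slab inside
`B_{ερ}` has `w₂`-mass `≲ (ερ)^{n+θ₃+θ₄}`; outside it `|x|^{θ₄} ≲ ρ^{θ₄} ε^{min(0,θ₄)}`, and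
`|x'|^{θ₃}` is invariant under translations along the `x_n`-axis, so covering the slab by
`O(1/ε)` balls of radius `2ερ` centred on that axis gives `|x'|^{θ₃}`-mass
`≲ ε^{-1} (ερ)^{n+θ₃}`. Both pieces are `≲ ε^{n-1+θ₃+min(0,θ₄)} ρ^{n+θ₃+θ₄}`, and
`ρ^{n+θ₃+θ₄}` times the length of the time interval is comparable to `ν_{w₂}(Q)`.
-/

open MeasureTheory

/-- The Euclidean norm of `x' = (x₁, …, x_{n-1})`, the first `n-1` coordinates of `x`. -/
noncomputable def primeNorm (n : ℕ) (x : EuclideanSpace ℝ (Fin n)) : ℝ :=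
  Real.sqrt (∑ i : Fin n, if (i : ℕ) < n - 1 then x i ^ 2 else 0)

/-- The anisotropic weight `w(x) = |x'|^θ |x|^θ'`. -/
noncomputable def anisoWeight (n : ℕ) (θ θ' : ℝ) (x : EuclideanSpace ℝ (Fin n)) : ℝ :=
  primeNorm n x ^ θ * ‖x‖ ^ θ'

lemma setIntegral_le_sum_of_subset_biUnion {X ι : Type*} [MeasurableSpace X] {μ : Measure X}
    {f : X → ℝ} {s : Set X} {t : Finset ι} {u : ι → Set X} (hf : ∀ x, 0 ≤ f x)
    (hu : ∀ i ∈ t, MeasurableSet (u i)) (hfu : ∀ i ∈ t, IntegrableOn f (u i) μ)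
    (hs : s ⊆ ⋃ i ∈ t, u i) :
    ∫ x in s, f x ∂μ ≤ ∑ i ∈ t, ∫ x in u i, f x ∂μ := by
  have hind : ∀ i ∈ t, Integrable ((u i).indicator f) μ :=
    fun i hi => (integrable_indicator_iff (hu i hi)).2 (hfu i hi)
  have hind₀ : ∀ i x, 0 ≤ (u i).indicator f x := fun i => Set.indicator_nonneg fun x _ => hf x
  have hle : (⋃ i ∈ t, u i).indicator f ≤ fun x => ∑ i ∈ t, (u i).indicator f x := by
    intro x
    by_cases hx : x ∈ ⋃ i ∈ t, u i
    · obtain ⟨i, hi, hxi⟩ := Set.mem_iUnion₂.1 hx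
      rw [Set.indicator_of_mem hx, ← Set.indicator_of_mem hxi f]
      exact Finset.single_le_sum (fun j _ => hind₀ j x) hi
    · rw [Set.indicator_of_notMem hx]
      exact Finset.sum_nonneg fun i _ => hind₀ i x
  calc ∫ x in s, f x ∂μ ≤ ∫ x in ⋃ i ∈ t, u i, f x ∂μ :=
        setIntegral_mono_set (integrableOn_finset_iUnion.2 hfu)
          (Filter.Eventually.of_forall hf) hs.eventuallyLE
    _ ≤ ∫ x, ∑ i ∈ t, (u i).indicator f x ∂μ := by
        rw [← integral_indicator (Finset.measurableSet_biUnion t hu)]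
        exact integral_mono_of_nonneg (Filter.Eventually.of_forall
          (Set.indicator_nonneg fun x _ => hf x)) (integrable_finsetSum _ hind)
          (Filter.Eventually.of_forall hle)
    _ = ∑ i ∈ t, ∫ x in u i, f x ∂μ := by
        rw [integral_finsetSum _ hind]
        exact Finset.sum_congr rfl fun i hi => integral_indicator (hu i hi)

section Translation

variable {E : Type*} [NormedAddCommGroup E] [MeasurableSpace E] [BorelSpace E]
  {μ : Measure E} [μ.IsAddRightInvariant] {f : E → ℝ} {v : E}

lemma setIntegral_ball_eq_ball_zero_of_add_invariant (hf : ∀ x, f (x + v) = f x) (R : ℝ) :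
    ∫ x in Metric.ball v R, f x ∂μ = ∫ x in Metric.ball 0 R, f x ∂μ := by
  have h := (measurePreserving_add_right μ v).setIntegral_preimage_emb
    (measurableEmbedding_addRight v) f (Metric.ball v R)
  have hpre : (· + v) ⁻¹' Metric.ball v R = Metric.ball (0 : E) R := by
    ext; simp [dist_eq_norm]
  simp only [hpre, hf] at h
  exact h.symm

lemma integrableOn_closedBall_zero_of_add_invariant (hf : ∀ x, f (x + v) = f x) {R : ℝ}
    (h : IntegrableOn f (Metric.closedBall v R) μ) :
    IntegrableOn f (Metric.closedBall 0 R) μ := by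
  have hpre : (· + v) ⁻¹' Metric.closedBall v R = Metric.closedBall (0 : E) R := by
    ext; simp [dist_eq_norm]
  rw [← (measurePreserving_add_right μ v).integrableOn_comp_preimage
    (measurableEmbedding_addRight v), hpre] at h
  simpa only [Function.comp_def, hf] using h

end Translation

section Product

variable {X Y : Type*} [MeasurableSpace X] [MeasurableSpace Y] {μ : Measure X} {ν : Measure Y}
  [SFinite μ] [SFinite ν]

lemma setIntegral_prod_comp_fst (f : X → ℝ) (s : Set X) (t : Set Y) :
    ∫ z in s ×ˢ t, f z.1 ∂μ.prod ν = (∫ x in s, f x ∂μ) * ν.real t := by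
  simpa using setIntegral_prod_mul (μ := μ) (ν := ν) f (fun _ => (1 : ℝ)) s t

lemma IntegrableOn.prod_comp_fst {f : X → ℝ} {s : Set X} {t : Set Y}
    (hf : IntegrableOn f s μ) (ht : ν t ≠ ⊤) :
    IntegrableOn (fun z : X × Y => f z.1) (s ×ˢ t) (μ.prod ν) := by
  rw [IntegrableOn, ← Measure.prod_restrict]
  simpa using hf.mul_prod (integrableOn_const (C := (1 : ℝ)) ht)

end Product

lemma rpow_le_rpow_mul_rpow_min_zero {ε ρ a τ : ℝ} (hε : 0 < ε) (hρ : 0 < ρ)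
    (h₁ : ε * ρ ≤ a) (h₂ : a ≤ ρ) : a ^ τ ≤ ρ ^ τ * ε ^ min 0 τ := by
  rcases le_total 0 τ with h | h
  · rw [min_eq_left h, Real.rpow_zero, mul_one]
    exact Real.rpow_le_rpow ((mul_pos hε hρ).le.trans h₁) h₂ h
  · rw [min_eq_right h, mul_comm, ← Real.mul_rpow hε.le hρ.le]
    exact Real.rpow_le_rpow_of_nonpos (mul_pos hε hρ) h₁ h

lemma min_zero_sub_eq_neg_max_zero_sub (a b : ℝ) : min 0 (a - b) = -max 0 (b - a) := by
  rw [← min_neg_neg, neg_zero, neg_sub]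

lemma primeNorm_nonneg (n : ℕ) (x : EuclideanSpace ℝ (Fin n)) : 0 ≤ primeNorm n x :=
  Real.sqrt_nonneg _

lemma primeNorm_le_norm (n : ℕ) (x : EuclideanSpace ℝ (Fin n)) : primeNorm n x ≤ ‖x‖ := by
  rw [EuclideanSpace.norm_eq, primeNorm]
  refine Real.sqrt_le_sqrt (Finset.sum_le_sum fun i _ => ?_)
  split_ifs <;> simp [sq_nonneg]

lemma continuous_primeNorm (n : ℕ) : Continuous (primeNorm n) := by
  refine Real.continuous_sqrt.comp (continuous_finsetSum _ fun i _ => ?_)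
  split_ifs <;> fun_prop

lemma anisoWeight_nonneg (n : ℕ) (θ θ' : ℝ) (x : EuclideanSpace ℝ (Fin n)) :
    0 ≤ anisoWeight n θ θ' x :=
  mul_nonneg (Real.rpow_nonneg (primeNorm_nonneg n x) θ) (Real.rpow_nonneg (norm_nonneg x) θ')

lemma primeNorm_sq_add_sq_last (m : ℕ) (x : EuclideanSpace ℝ (Fin (m + 1))) :
    primeNorm (m + 1) x ^ 2 + x (Fin.last m) ^ 2 = ‖x‖ ^ 2 := by
  rw [primeNorm, Real.sq_sqrt (Finset.sum_nonneg fun i _ => by positivity),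
    EuclideanSpace.real_norm_sq_eq, Fin.sum_univ_castSucc, Fin.sum_univ_castSucc]
  simp

lemma primeNorm_add_smul_single_last (m : ℕ) (x : EuclideanSpace ℝ (Fin (m + 1))) (t : ℝ) :
    primeNorm (m + 1) (x + t • EuclideanSpace.single (Fin.last m) 1) = primeNorm (m + 1) x := by
  unfold primeNorm
  congr 1
  refine Finset.sum_congr rfl fun i _ => ?_
  split_ifs with hi
  · have : i ≠ Fin.last m := fun h => by simp [h] at hi
    simp [this]
  · rfl

lemma anisoWeight_zero_add_smul_single_last (m : ℕ) (θ : ℝ)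
    (x : EuclideanSpace ℝ (Fin (m + 1))) (t : ℝ) :
    anisoWeight (m + 1) θ 0 (x + t • EuclideanSpace.single (Fin.last m) 1) =
      anisoWeight (m + 1) θ 0 x := by
  simp only [anisoWeight, Real.rpow_zero, mul_one, primeNorm_add_smul_single_last]

lemma locallyIntegrable_anisoWeight_zero {m : ℕ} {θ θ' : ℝ}
    (hw : LocallyIntegrable (anisoWeight (m + 1) θ θ')) :
    LocallyIntegrable (anisoWeight (m + 1) θ 0) := by
  rw [locallyIntegrable_iff]
  intro k hk
  obtain ⟨R, hR, hkR⟩ := hk.isBounded.subset_closedBall_lt 0 0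
  refine IntegrableOn.mono_set ?_ hkR
  set v := (R + 1) • EuclideanSpace.single (Fin.last m) (1 : ℝ)
  refine integrableOn_closedBall_zero_of_add_invariant (v := v)
    (fun x => anisoWeight_zero_add_smul_single_last m θ x (R + 1)) ?_
  -- away from the origin `‖x‖ ^ θ'` is continuous and positive, so it can be divided out
  have hv : ‖v‖ = R + 1 := by simp [v, norm_smul, abs_of_pos (by linarith : 0 < R + 1)]
  have h0 : ∀ x ∈ Metric.closedBall v R, x ≠ 0 := by
    rintro x hx rfl
    rw [Metric.mem_closedBall, dist_zero_left, hv] at hx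
    linarith
  refine ((hw.integrableOn_isCompact (isCompact_closedBall v R)).mul_continuousOn
    (g' := fun x => ‖x‖ ^ (-θ'))
    (continuous_norm.continuousOn.rpow_const fun x hx => Or.inl (norm_ne_zero_iff.2 (h0 x hx)))
    (isCompact_closedBall v R)).congr_fun (fun x hx => ?_) measurableSet_closedBall
  simp only [anisoWeight, mul_assoc, ← Real.rpow_add (norm_pos_iff.2 (h0 x hx)), add_neg_cancel]

lemma slab_inter_ball_subset_biUnion_ball {m : ℕ} {r ρ : ℝ} (hr : 0 < r) :
    {x : EuclideanSpace ℝ (Fin (m + 1)) | primeNorm (m + 1) x ≤ r} ∩ Metric.ball 0 ρ ⊆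
      ⋃ k ∈ Finset.Icc (-⌈ρ / r⌉) ⌈ρ / r⌉,
        Metric.ball (((k : ℝ) * r) • EuclideanSpace.single (Fin.last m) (1 : ℝ)) (2 * r) := by
  rintro x ⟨hx', hx⟩
  set s := x (Fin.last m)
  have hs : |s| < ρ := (PiLp.norm_apply_le x _).trans_lt (mem_ball_zero_iff.1 hx)
  refine Set.mem_biUnion (x := ⌊s / r⌋) (Finset.mem_Icc.2 ⟨?_, ?_⟩) ?_
  · rw [← Int.floor_neg, ← neg_div]
    exact Int.floor_mono ((div_le_div_iff_of_pos_right hr).2 (by linarith [neg_abs_le s]))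
  · exact (Int.floor_mono (div_le_div_of_nonneg_right ((le_abs_self s).trans hs.le) hr.le)).trans
      (Int.floor_le_ceil _)
  have hfl : ⌊s / r⌋ * r ≤ s := (le_div_iff₀ hr).1 (Int.floor_le _)
  have hfl' : s < (⌊s / r⌋ + 1) * r := (div_lt_iff₀ hr).1 (Int.lt_floor_add_one _)
  have hx'' : primeNorm (m + 1) x ^ 2 ≤ r ^ 2 := pow_le_pow_left₀ (primeNorm_nonneg _ x) hx' 2
  have hsq := primeNorm_sq_add_sq_last m
    (x + (-(⌊s / r⌋ * r)) • EuclideanSpace.single (Fin.last m) 1)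
  rw [primeNorm_add_smul_single_last] at hsq
  rw [Metric.mem_ball, dist_eq_norm, sub_eq_add_neg, ← neg_smul,
    ← sq_lt_sq₀ (norm_nonneg _) (by positivity), ← hsq]
  simp only [neg_smul, PiLp.add_apply, PiLp.neg_apply, PiLp.smul_apply, PiLp.single_eq_same,
    smul_eq_mul, mul_one]
  nlinarith

lemma setIntegral_slab_inter_ball_le {m : ℕ} {f : EuclideanSpace ℝ (Fin (m + 1)) → ℝ}
    (hf₀ : ∀ x, 0 ≤ f x)
    (hf : ∀ x (t : ℝ), f (x + t • EuclideanSpace.single (Fin.last m) 1) = f x)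
    (hfi : LocallyIntegrable f) {r ρ : ℝ} (hr : 0 < r) (hρ : 0 ≤ ρ) :
    ∫ x in {x | primeNorm (m + 1) x ≤ r} ∩ Metric.ball 0 ρ, f x
      ≤ (2 * (ρ / r) + 3) * ∫ x in Metric.ball 0 (2 * r), f x := by
  set K := ⌈ρ / r⌉
  have hcard : ((Finset.Icc (-K) K).card : ℝ) ≤ 2 * (ρ / r) + 3 := by
    have hK : 0 ≤ K := Int.ceil_nonneg (div_nonneg hρ hr.le)
    rw [← Int.cast_natCast, Int.card_Icc_of_le (-K) K (by omega)]
    push_cast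
    linarith [Int.ceil_lt_add_one (ρ / r)]
  calc ∫ x in {x | primeNorm (m + 1) x ≤ r} ∩ Metric.ball 0 ρ, f x
      ≤ ∑ k ∈ Finset.Icc (-K) K, ∫ x in
          Metric.ball (((k : ℝ) * r) • EuclideanSpace.single (Fin.last m) (1 : ℝ)) (2 * r), f x :=
        setIntegral_le_sum_of_subset_biUnion hf₀ (fun _ _ => measurableSet_ball)
          (fun _ _ => (hfi.integrableOn_isCompact (isCompact_closedBall _ _)).mono_set
            Metric.ball_subset_closedBall)
          (slab_inter_ball_subset_biUnion_ball hr)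
    _ = (Finset.Icc (-K) K).card * ∫ x in Metric.ball 0 (2 * r), f x := by
        rw [Finset.sum_congr rfl fun k _ =>
          setIntegral_ball_eq_ball_zero_of_add_invariant (hf · _) _, Finset.sum_const,
          nsmul_eq_mul]
    _ ≤ _ := mul_le_mul_of_nonneg_right hcard
        (setIntegral_nonneg measurableSet_ball fun x _ => hf₀ x)

lemma anisoWeight_le_mul_anisoWeight_zero {n : ℕ} {θ θ' ε ρ : ℝ} (hε : 0 < ε) (hρ : 0 < ρ)
    {x : EuclideanSpace ℝ (Fin n)} (h₁ : ε * ρ ≤ ‖x‖) (h₂ : ‖x‖ ≤ ρ) :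
    anisoWeight n θ θ' x ≤ ρ ^ θ' * ε ^ min 0 θ' * anisoWeight n θ 0 x := by
  rw [anisoWeight, anisoWeight, Real.rpow_zero, mul_one, mul_comm]
  exact mul_le_mul_of_nonneg_right (rpow_le_rpow_mul_rpow_min_zero hε hρ h₁ h₂)
    (Real.rpow_nonneg (primeNorm_nonneg n x) θ)

lemma setIntegral_anisoWeight_slab_diff_ball_le {m : ℕ} {θ θ' C ε ρ : ℝ}
    (hw : LocallyIntegrable (anisoWeight (m + 1) θ θ'))
    (hC : ∫ x in Metric.ball 0 (2 * (ε * ρ)), anisoWeight (m + 1) θ 0 x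
      ≤ C * (2 * (ε * ρ)) ^ (((m + 1 : ℕ) : ℝ) + θ))
    (hε : 0 < ε) (hε₁ : ε ≤ 1 / 2) (hρ : 0 < ρ) :
    ∫ x in ({x | primeNorm (m + 1) x ≤ ε * ρ} ∩ Metric.ball 0 ρ) \ Metric.ball 0 (ε * ρ),
        anisoWeight (m + 1) θ θ' x
      ≤ 4 * 2 ^ (((m + 1 : ℕ) : ℝ) + θ) * C * ε ^ (((m + 1 : ℕ) : ℝ) - 1 + θ + min 0 θ') *
          ρ ^ (((m + 1 : ℕ) : ℝ) + θ + θ') := by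
  set d : ℝ := ((m + 1 : ℕ) : ℝ)
  set S := {x | primeNorm (m + 1) x ≤ ε * ρ} ∩ Metric.ball 0 ρ
  set L := ρ ^ θ' * ε ^ min 0 θ'
  have hw₀ := locallyIntegrable_anisoWeight_zero hw
  have hS : S ⊆ Metric.closedBall 0 ρ := Set.inter_subset_right.trans Metric.ball_subset_closedBall
  have hintS := (hw₀.integrableOn_isCompact (isCompact_closedBall 0 ρ)).mono_set hS
  have hslab := setIntegral_slab_inter_ball_le (anisoWeight_nonneg (m + 1) θ 0)
    (anisoWeight_zero_add_smul_single_last m θ) hw₀ (mul_pos hε hρ) hρ.le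
  rw [show ρ / (ε * ρ) = ε⁻¹ by field_simp] at hslab
  have hC₀ : 0 ≤ C * (2 * (ε * ρ)) ^ (d + θ) :=
    (setIntegral_nonneg measurableSet_ball fun x _ => anisoWeight_nonneg _ _ _ x).trans hC
  have hε₂ : 2 ≤ ε⁻¹ := by rw [le_inv_comm₀ two_pos hε]; linarith
  calc ∫ x in S \ Metric.ball 0 (ε * ρ), anisoWeight (m + 1) θ θ' x
      ≤ ∫ x in S \ Metric.ball 0 (ε * ρ), L * anisoWeight (m + 1) θ 0 x := by
        refine setIntegral_mono_on ((hw.integrableOn_isCompact (isCompact_closedBall 0 ρ)).mono_set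
          (Set.sdiff_subset.trans hS)) ((hintS.mono_set Set.sdiff_subset).const_mul L)
          (((measurableSet_le (continuous_primeNorm _).measurable measurable_const).inter
            measurableSet_ball).diff measurableSet_ball) fun x hx => ?_
        simp only [S, Set.mem_sdiff, Set.mem_inter_iff, mem_ball_zero_iff, not_lt] at hx
        exact anisoWeight_le_mul_anisoWeight_zero hε hρ hx.2 hx.1.2.le
    _ ≤ L * ∫ x in S, anisoWeight (m + 1) θ 0 x := by
        rw [integral_const_mul]
        exact mul_le_mul_of_nonneg_left (setIntegral_mono_set hintS
          (Filter.Eventually.of_forall fun x => anisoWeight_nonneg _ _ _ x)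
          Set.sdiff_subset.eventuallyLE) (by positivity)
    _ ≤ L * ((2 * ε⁻¹ + 3) * (C * (2 * (ε * ρ)) ^ (d + θ))) := by
        gcongr
        exact hslab.trans (mul_le_mul_of_nonneg_left hC (by positivity))
    _ ≤ L * (4 * ε⁻¹ * (C * (2 * (ε * ρ)) ^ (d + θ))) := by
        gcongr
        linarith
    _ = 4 * 2 ^ (d + θ) * C * ε ^ (d - 1 + θ + min 0 θ') * ρ ^ (d + θ + θ') := by
        rw [show d - 1 + θ + min 0 θ' = d + θ + min 0 θ' + (-1) by ring, Real.rpow_add hε,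
          Real.rpow_add hε, Real.rpow_neg_one, Real.rpow_add hρ,
          Real.mul_rpow two_pos.le (by positivity), Real.mul_rpow hε.le hρ.le]
        ring

lemma setIntegral_anisoWeight_slab_le {m : ℕ} {θ θ' C₂ C₃ ε ρ : ℝ}
    (hw : LocallyIntegrable (anisoWeight (m + 1) θ θ'))
    (hC₂ : ∫ x in Metric.ball 0 (ε * ρ), anisoWeight (m + 1) θ θ' x
      ≤ C₂ * (ε * ρ) ^ (((m + 1 : ℕ) : ℝ) + θ + θ'))
    (hC₃ : ∫ x in Metric.ball 0 (2 * (ε * ρ)), anisoWeight (m + 1) θ 0 x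
      ≤ C₃ * (2 * (ε * ρ)) ^ (((m + 1 : ℕ) : ℝ) + θ))
    (hε : 0 < ε) (hε₁ : ε ≤ 1 / 2) (hρ : 0 < ρ) :
    ∫ x in {x | primeNorm (m + 1) x ≤ ε * ρ} ∩ Metric.ball 0 ρ, anisoWeight (m + 1) θ θ' x
      ≤ (C₂ + 4 * 2 ^ (((m + 1 : ℕ) : ℝ) + θ) * C₃) *
          ε ^ (((m + 1 : ℕ) : ℝ) - 1 + θ + min 0 θ') * ρ ^ (((m + 1 : ℕ) : ℝ) + θ + θ') := by
  set d : ℝ := ((m + 1 : ℕ) : ℝ)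
  have hint : ∀ R, IntegrableOn (anisoWeight (m + 1) θ θ') (Metric.ball 0 R) :=
    fun R => (hw.integrableOn_isCompact (isCompact_closedBall 0 R)).mono_set
      Metric.ball_subset_closedBall
  have hC₂₀ : 0 ≤ C₂ := nonneg_of_mul_nonneg_left ((setIntegral_nonneg measurableSet_ball
    fun x _ => anisoWeight_nonneg _ _ _ x).trans hC₂) (by positivity)
  rw [← integral_inter_add_sdiff measurableSet_ball ((hint ρ).mono_set Set.inter_subset_right),
    add_mul, add_mul]
  refine add_le_add ?_ (setIntegral_anisoWeight_slab_diff_ball_le hw hC₃ hε hε₁ hρ)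
  calc ∫ x in {x | primeNorm (m + 1) x ≤ ε * ρ} ∩ Metric.ball 0 ρ ∩ Metric.ball 0 (ε * ρ),
        anisoWeight (m + 1) θ θ' x
      ≤ ∫ x in Metric.ball 0 (ε * ρ), anisoWeight (m + 1) θ θ' x :=
        setIntegral_mono_set (hint _) (Filter.Eventually.of_forall (anisoWeight_nonneg _ _ _))
          Set.inter_subset_right.eventuallyLE
    _ ≤ C₂ * ε ^ (d + θ + θ') * ρ ^ (d + θ + θ') := by
        rwa [Real.mul_rpow hε.le hρ.le, ← mul_assoc] at hC₂
    _ ≤ C₂ * ε ^ (d - 1 + θ + min 0 θ') * ρ ^ (d + θ + θ') := by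
        gcongr C₂ * ?_ * _
        exact Real.rpow_le_rpow_of_exponent_ge hε (by linarith)
          (by linarith [min_le_right 0 θ'])

noncomputable def anisoRatioBound (ε ρ θ₁ θ₂ θ₃ θ₄ : ℝ) : ℝ :=
  ρ ^ (θ₃ - θ₁) * ε ^ min 0 (θ₃ - θ₁) * (ρ ^ (θ₄ - θ₂) * ε ^ min 0 (θ₄ - θ₂))

lemma anisoRatioBound_nonneg {ε ρ : ℝ} (hε : 0 < ε) (hρ : 0 < ρ) (θ₁ θ₂ θ₃ θ₄ : ℝ) :
    0 ≤ anisoRatioBound ε ρ θ₁ θ₂ θ₃ θ₄ := by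
  unfold anisoRatioBound
  positivity

lemma anisoWeight_le_anisoRatioBound_mul {n : ℕ} {θ₁ θ₂ θ₃ θ₄ ε ρ : ℝ} (hε : 0 < ε)
    (hρ : 0 < ρ) {x : EuclideanSpace ℝ (Fin n)} (h₁ : ε * ρ ≤ primeNorm n x) (h₂ : ‖x‖ ≤ ρ) :
    anisoWeight n θ₃ θ₄ x ≤ anisoRatioBound ε ρ θ₁ θ₂ θ₃ θ₄ * anisoWeight n θ₁ θ₂ x := by
  have ha : 0 < primeNorm n x := (mul_pos hε hρ).trans_le h₁
  have hb : 0 < ‖x‖ := ha.trans_le (primeNorm_le_norm n x)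
  have hsplit : anisoWeight n θ₃ θ₄ x = anisoWeight n θ₁ θ₂ x *
      (primeNorm n x ^ (θ₃ - θ₁) * ‖x‖ ^ (θ₄ - θ₂)) := by
    rw [anisoWeight, anisoWeight, mul_mul_mul_comm, ← Real.rpow_add ha, ← Real.rpow_add hb,
      add_sub_cancel, add_sub_cancel]
  rw [hsplit, mul_comm _ (anisoWeight n θ₁ θ₂ x)]
  refine mul_le_mul_of_nonneg_left (mul_le_mul ?_ ?_ (by positivity) (by positivity))
    (anisoWeight_nonneg n θ₁ θ₂ x)
  · exact rpow_le_rpow_mul_rpow_min_zero hε hρ h₁ ((primeNorm_le_norm n x).trans h₂)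
  · exact rpow_le_rpow_mul_rpow_min_zero hε hρ (h₁.trans (primeNorm_le_norm n x)) h₂

lemma anisoRatioBound_mul_rpow_mul_rpow {ε ρ : ℝ} (hε : 0 < ε) (hρ : 0 < ρ)
    (γ δ θ₁ θ₂ θ₃ θ₄ : ℝ) :
    anisoRatioBound ε ρ θ₁ θ₂ θ₃ θ₄ *
        (ε ^ (γ + max 0 (θ₁ - θ₃) + max 0 (θ₂ - θ₄)) * ρ ^ (δ + θ₁ + θ₂))
      = ε ^ γ * ρ ^ (δ + θ₃ + θ₄) := by
  rw [anisoRatioBound, min_zero_sub_eq_neg_max_zero_sub, min_zero_sub_eq_neg_max_zero_sub,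
    Real.rpow_neg hε.le, Real.rpow_neg hε.le, Real.rpow_add hε (γ + _), Real.rpow_add hε γ,
    show δ + θ₃ + θ₄ = θ₃ - θ₁ + (θ₄ - θ₂) + (δ + θ₁ + θ₂) by ring,
    Real.rpow_add hρ (θ₃ - θ₁ + _), Real.rpow_add hρ (θ₃ - θ₁)]
  field_simp

lemma setIntegral_anisoWeight_fst_le_slab_add {n : ℕ} {θ₁ θ₂ θ₃ θ₄ ε ρ : ℝ} {t : Set ℝ}
    {E : Set (EuclideanSpace ℝ (Fin n) × ℝ)} (hw₁ : LocallyIntegrable (anisoWeight n θ₁ θ₂))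
    (hw₂ : LocallyIntegrable (anisoWeight n θ₃ θ₄)) (ht : volume t ≠ ⊤) (hE : MeasurableSet E)
    (hEQ : E ⊆ Metric.ball 0 ρ ×ˢ t) (hε : 0 < ε) (hρ : 0 < ρ) :
    ∫ z in E, anisoWeight n θ₃ θ₄ z.1
      ≤ (∫ x in {x | primeNorm n x ≤ ε * ρ} ∩ Metric.ball 0 ρ, anisoWeight n θ₃ θ₄ x) *
          volume.real t +
        anisoRatioBound ε ρ θ₁ θ₂ θ₃ θ₄ * ∫ z in E, anisoWeight n θ₁ θ₂ z.1 := by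
  set S := {x | primeNorm n x ≤ ε * ρ}
  have hS : MeasurableSet S := measurableSet_le (continuous_primeNorm n).measurable measurable_const
  have hint : ∀ {θ θ'}, LocallyIntegrable (anisoWeight n θ θ') →
      IntegrableOn (fun z : EuclideanSpace ℝ (Fin n) × ℝ => anisoWeight n θ θ' z.1)
        (Metric.ball 0 ρ ×ˢ t) := fun hw => by
    rw [Measure.volume_eq_prod]
    exact IntegrableOn.prod_comp_fst ((hw.integrableOn_isCompact
      (isCompact_closedBall 0 ρ)).mono_set Metric.ball_subset_closedBall) ht
  rw [← integral_inter_add_sdiff (hS.prod MeasurableSet.univ) ((hint hw₂).mono_set hEQ)]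
  gcongr ?_ + ?_
  · calc ∫ z in E ∩ S ×ˢ Set.univ, anisoWeight n θ₃ θ₄ z.1
        ≤ ∫ z in (S ∩ Metric.ball 0 ρ) ×ˢ t, anisoWeight n θ₃ θ₄ z.1 := by
          refine setIntegral_mono_set ((hint hw₂).mono_set
            (Set.prod_mono Set.inter_subset_right subset_rfl))
            (Filter.Eventually.of_forall fun z => anisoWeight_nonneg _ _ _ z.1)
            (Filter.Eventually.of_forall fun z hz => ?_)
          exact ⟨⟨hz.2.1, (hEQ hz.1).1⟩, (hEQ hz.1).2⟩
      _ = _ := by rw [Measure.volume_eq_prod, setIntegral_prod_comp_fst]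
  · calc ∫ z in E \ S ×ˢ Set.univ, anisoWeight n θ₃ θ₄ z.1
        ≤ ∫ z in E \ S ×ˢ Set.univ,
            anisoRatioBound ε ρ θ₁ θ₂ θ₃ θ₄ * anisoWeight n θ₁ θ₂ z.1 := by
          refine setIntegral_mono_on ((hint hw₂).mono_set (Set.sdiff_subset.trans hEQ))
            (((hint hw₁).mono_set (Set.sdiff_subset.trans hEQ)).const_mul _)
            (hE.diff (hS.prod MeasurableSet.univ)) fun z hz => ?_
          have hz' : ¬ primeNorm n z.1 ≤ ε * ρ := fun h => hz.2 ⟨h, trivial⟩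
          exact anisoWeight_le_anisoRatioBound_mul hε hρ (not_le.1 hz').le
            (mem_ball_zero_iff.1 (hEQ hz.1).1).le
      _ ≤ anisoRatioBound ε ρ θ₁ θ₂ θ₃ θ₄ * ∫ z in E, anisoWeight n θ₁ θ₂ z.1 := by
          rw [integral_const_mul]
          exact mul_le_mul_of_nonneg_left (setIntegral_mono_set ((hint hw₁).mono_set hEQ)
            (Filter.Eventually.of_forall fun z => anisoWeight_nonneg _ _ _ z.1)
            Set.sdiff_subset.eventuallyLE) (anisoRatioBound_nonneg hε hρ _ _ _ _)

lemma setIntegral_anisoWeight_fst_le_of_le_rpow {m : ℕ} {θ₁ θ₂ θ₃ θ₄ C₁ C₂ C₃ ε ρ : ℝ}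
    {t : Set ℝ} {E : Set (EuclideanSpace ℝ (Fin (m + 1)) × ℝ)}
    (hw₁ : LocallyIntegrable (anisoWeight (m + 1) θ₁ θ₂))
    (hw₂ : LocallyIntegrable (anisoWeight (m + 1) θ₃ θ₄))
    (hC₁ : ∫ x in Metric.ball 0 ρ, anisoWeight (m + 1) θ₁ θ₂ x
      ≤ C₁ * ρ ^ (((m + 1 : ℕ) : ℝ) + θ₁ + θ₂))
    (hC₂ : ∫ x in Metric.ball 0 (ε * ρ), anisoWeight (m + 1) θ₃ θ₄ x
      ≤ C₂ * (ε * ρ) ^ (((m + 1 : ℕ) : ℝ) + θ₃ + θ₄))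
    (hC₃ : ∫ x in Metric.ball 0 (2 * (ε * ρ)), anisoWeight (m + 1) θ₃ 0 x
      ≤ C₃ * (2 * (ε * ρ)) ^ (((m + 1 : ℕ) : ℝ) + θ₃))
    (ht : volume t ≠ ⊤) (hE : MeasurableSet E) (hEQ : E ⊆ Metric.ball 0 ρ ×ˢ t)
    (hε : 0 < ε) (hε₁ : ε ≤ 1 / 2) (hρ : 0 < ρ)
    (hE₁ : ∫ z in E, anisoWeight (m + 1) θ₁ θ₂ z.1 ≤
      ε ^ (((m + 1 : ℕ) : ℝ) - 1 + θ₃ + min 0 θ₄ + max 0 (θ₁ - θ₃) + max 0 (θ₂ - θ₄)) *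
        ((∫ x in Metric.ball 0 ρ, anisoWeight (m + 1) θ₁ θ₂ x) * volume.real t)) :
    ∫ z in E, anisoWeight (m + 1) θ₃ θ₄ z.1
      ≤ (C₂ + 4 * 2 ^ (((m + 1 : ℕ) : ℝ) + θ₃) * C₃ + C₁) *
          ε ^ (((m + 1 : ℕ) : ℝ) - 1 + θ₃ + min 0 θ₄) *
          ρ ^ (((m + 1 : ℕ) : ℝ) + θ₃ + θ₄) * volume.real t := by
  set d : ℝ := ((m + 1 : ℕ) : ℝ)
  have hM := anisoRatioBound_nonneg hε hρ θ₁ θ₂ θ₃ θ₄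
  calc ∫ z in E, anisoWeight (m + 1) θ₃ θ₄ z.1
      ≤ _ := setIntegral_anisoWeight_fst_le_slab_add hw₁ hw₂ ht hE hEQ hε hρ
    _ ≤ (C₂ + 4 * 2 ^ (d + θ₃) * C₃) * ε ^ (d - 1 + θ₃ + min 0 θ₄) * ρ ^ (d + θ₃ + θ₄) *
          volume.real t + anisoRatioBound ε ρ θ₁ θ₂ θ₃ θ₄ *
          (ε ^ (d - 1 + θ₃ + min 0 θ₄ + max 0 (θ₁ - θ₃) + max 0 (θ₂ - θ₄)) *
            (C₁ * ρ ^ (d + θ₁ + θ₂) * volume.real t)) := by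
        gcongr
        · exact setIntegral_anisoWeight_slab_le hw₂ hC₂ hC₃ hε hε₁ hρ
        · exact hE₁.trans (by gcongr)
    _ = _ := by
        linear_combination (C₁ * volume.real t) *
          anisoRatioBound_mul_rpow_mul_rpow hε hρ (d - 1 + θ₃ + min 0 θ₄) d θ₁ θ₂ θ₃ θ₄

theorem stmt6_general (n : ℕ) (hn : 2 ≤ n) (p θ₁ θ₂ θ₃ θ₄ : ℝ)
    (hw₁ : LocallyIntegrable (anisoWeight n θ₁ θ₂) volume)
    (hw₂ : LocallyIntegrable (anisoWeight n θ₃ θ₄) volume)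
    (β ϑ : ℝ)
    (hβ : β = (n : ℝ) - 1 + θ₃ + min 0 θ₄ + max 0 (θ₁ - θ₃) + max 0 (θ₂ - θ₄))
    -- the two-sided ball measure bounds for anisotropic power weights, which may be assumed
    (hB : ∀ θ θ' : ℝ, LocallyIntegrable (anisoWeight n θ θ') volume →
      ∃ C > 0, ∀ ρ > (0 : ℝ),
        C⁻¹ * ρ ^ ((n : ℝ) + θ + θ')
            ≤ ∫ x in Metric.ball (0 : EuclideanSpace ℝ (Fin n)) ρ, anisoWeight n θ θ' x ∧
        ∫ x in Metric.ball (0 : EuclideanSpace ℝ (Fin n)) ρ, anisoWeight n θ θ' x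
            ≤ C * ρ ^ ((n : ℝ) + θ + θ')) :
    ∃ C₀ > 0, ∀ ε ρ : ℝ, 0 < ε → ε ≤ 1 / 2 → 0 < ρ → ρ ≤ 1 / 2 →
      ∀ E : Set (EuclideanSpace ℝ (Fin n) × ℝ), MeasurableSet E →
        E ⊆ Metric.ball (0 : EuclideanSpace ℝ (Fin n)) ρ ×ˢ Set.Ioc (-(ρ ^ (p + ϑ))) 0 →
        (∫ z in E, anisoWeight n θ₁ θ₂ z.1) /
            (∫ z in Metric.ball (0 : EuclideanSpace ℝ (Fin n)) ρ ×ˢ Set.Ioc (-(ρ ^ (p + ϑ))) 0,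
              anisoWeight n θ₁ θ₂ z.1) ≤ ε ^ β →
        (∫ z in E, anisoWeight n θ₃ θ₄ z.1) /
            (∫ z in Metric.ball (0 : EuclideanSpace ℝ (Fin n)) ρ ×ˢ Set.Ioc (-(ρ ^ (p + ϑ))) 0,
              anisoWeight n θ₃ θ₄ z.1)
          ≤ C₀ * ε ^ ((n : ℝ) - 1 + θ₃ + min 0 θ₄) := by
  obtain ⟨m, rfl⟩ : ∃ m, n = m + 1 := ⟨n - 1, by omega⟩
  obtain ⟨C₁, hC₁, hB₁⟩ := hB θ₁ θ₂ hw₁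
  obtain ⟨C₂, hC₂, hB₂⟩ := hB θ₃ θ₄ hw₂
  obtain ⟨C₃, hC₃, hB₃⟩ := hB θ₃ 0 (locallyIntegrable_anisoWeight_zero hw₂)
  refine ⟨C₂ * (C₂ + 4 * 2 ^ (((m + 1 : ℕ) : ℝ) + θ₃) * C₃ + C₁), by positivity,
    fun ε ρ hε hε₁ hρ _ E hE hEQ hratio => ?_⟩
  have hT : 0 < volume.real (Set.Ioc (-(ρ ^ (p + ϑ))) 0) := by
    rw [Real.volume_real_Ioc, zero_sub, neg_neg, max_eq_left (by positivity)]
    positivity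
  simp only [Measure.volume_eq_prod, setIntegral_prod_comp_fst] at hratio ⊢
  rw [div_le_iff₀ (mul_pos (lt_of_lt_of_le (by positivity) (hB₁ ρ hρ).1) hT)] at hratio
  rw [div_le_iff₀ (mul_pos (lt_of_lt_of_le (by positivity) (hB₂ ρ hρ).1) hT)]
  subst hβ
  refine (setIntegral_anisoWeight_fst_le_of_le_rpow hw₁ hw₂ (hB₁ ρ hρ).2
    (hB₂ _ (by positivity)).2 (by simpa only [add_zero] using (hB₃ _ (by positivity)).2)
    measure_Ioc_lt_top.ne hE hEQ hε hε₁ hρ hratio).trans (le_of_le_of_eq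
    (mul_le_mul_of_nonneg_right (mul_le_mul_of_nonneg_left
      ((inv_mul_le_iff₀ hC₂).1 (hB₂ ρ hρ).1) (by positivity)) hT.le) ?_)
  ring

/-- Switch lemma between the space-time measures `ν_{w₁}` and `ν_{w₂}` associated with the
anisotropic weights `w₁ = |x'|^θ₁|x|^θ₂` and `w₂ = |x'|^θ₃|x|^θ₄` on the intrinsic cylinder
`Q(ρ) = B_ρ × (-ρ^{p+ϑ}, 0]` where `ϑ = θ₁+θ₂-θ₃-θ₄`:
if `ν_{w₁}(E)/ν_{w₁}(Q(ρ)) ≤ ε^β` then `ν_{w₂}(E)/ν_{w₂}(Q(ρ)) ≤ C₀ ε^{n-1+θ₃+min{0,θ₄}}`. -/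
theorem stmt6 (n : ℕ) (hn : 2 ≤ n) (p θ₁ θ₂ θ₃ θ₄ : ℝ) (hp : 1 < p)
    (hθ₁ : -((n : ℝ) - 1) < θ₁) (hθ₃ : -((n : ℝ) - 1) < θ₃)
    (hw₁ : LocallyIntegrable (anisoWeight n θ₁ θ₂) volume)
    (hw₂ : LocallyIntegrable (anisoWeight n θ₃ θ₄) volume)
    (hmin : (1 : ℝ) - n < θ₃ + min 0 θ₄)
    (β ϑ : ℝ)
    (hβ : β = (n : ℝ) - 1 + θ₃ + min 0 θ₄ + max 0 (θ₁ - θ₃) + max 0 (θ₂ - θ₄))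
    (hϑ : ϑ = θ₁ + θ₂ - θ₃ - θ₄)
    -- the two-sided ball measure bounds for anisotropic power weights, which may be assumed
    (hB : ∀ θ θ' : ℝ, LocallyIntegrable (anisoWeight n θ θ') volume →
      ∃ C > 0, ∀ ρ > (0 : ℝ),
        C⁻¹ * ρ ^ ((n : ℝ) + θ + θ')
            ≤ ∫ x in Metric.ball (0 : EuclideanSpace ℝ (Fin n)) ρ, anisoWeight n θ θ' x ∧
        ∫ x in Metric.ball (0 : EuclideanSpace ℝ (Fin n)) ρ, anisoWeight n θ θ' x
            ≤ C * ρ ^ ((n : ℝ) + θ + θ')) :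
    ∃ C₀ > 0, ∀ ε ρ : ℝ, 0 < ε → ε ≤ 1 / 2 → 0 < ρ → ρ ≤ 1 / 2 →
      ∀ E : Set (EuclideanSpace ℝ (Fin n) × ℝ), MeasurableSet E →
        E ⊆ Metric.ball (0 : EuclideanSpace ℝ (Fin n)) ρ ×ˢ Set.Ioc (-(ρ ^ (p + ϑ))) 0 →
        (∫ z in E, anisoWeight n θ₁ θ₂ z.1) /
            (∫ z in Metric.ball (0 : EuclideanSpace ℝ (Fin n)) ρ ×ˢ Set.Ioc (-(ρ ^ (p + ϑ))) 0,
              anisoWeight n θ₁ θ₂ z.1) ≤ ε ^ β →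
        (∫ z in E, anisoWeight n θ₃ θ₄ z.1) /
            (∫ z in Metric.ball (0 : EuclideanSpace ℝ (Fin n)) ρ ×ˢ Set.Ioc (-(ρ ^ (p + ϑ))) 0,
              anisoWeight n θ₃ θ₄ z.1)
          ≤ C₀ * ε ^ ((n : ℝ) - 1 + θ₃ + min 0 θ₄) :=
  stmt6_general n hn p θ₁ θ₂ θ₃ θ₄ hw₁ hw₂ β ϑ hβ hB
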